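/- Conversely, if ŷ · v(x) ⬝ (μ₊ - μ₋) > 0, then the entropy-minimization gradient step using x strictly increases the difference of mean logits between the two classes. -/

import Mathlib

open RealInnerProductSpace

noncomputable def sigmoid (a : ℝ) : ℝ := 1 / (1 + Real.exp (-a))

noncomputable def sigEnt (a : ℝ) : ℝ :=
  -sigmoid a * Real.log (sigmoid a) - (1 - sigmoid a) * Real.log (1 - sigmoid a)

/-!
The entropy of the prediction at logit `a` is `sigEnt a = binEntropy (σ a)`, and since
`log (1 - σ a) - log (σ a) = -a` the chain rule gives `sigEnt' a = -a σ(a) (1 - σ(a))`.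
Hence a descent step on `θ ↦ sigEnt ⟪θ, v⟫` moves `θ` by `η a σ(a) (1 - σ(a)) • v`, a positive
multiple of `ŷ • v`, and changes `⟪θ, μ₊⟫ - ⟪θ, μ₋⟫` by a positive multiple of `ŷ ⟪v, μ₊ - μ₋⟫`.
-/

lemma sigmoid_eq_real_sigmoid : sigmoid = Real.sigmoid :=
  funext fun _ => one_div _

lemma sigEnt_eq_binEntropy_comp_sigmoid : sigEnt = Real.binEntropy ∘ Real.sigmoid := by
  ext a
  simp only [sigEnt, sigmoid_eq_real_sigmoid, Function.comp_apply,
    Real.binEntropy_eq_negMulLog_add_negMulLog_one_sub, Real.negMulLog]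
  ring

lemma Real.log_one_sub_sigmoid_sub_log_sigmoid (x : ℝ) :
    Real.log (1 - Real.sigmoid x) - Real.log (Real.sigmoid x) = -x := by
  rw [← Real.sigmoid_neg, ← Real.sigmoid_mul_rexp_neg,
    Real.log_mul (Real.sigmoid_pos x).ne' (Real.exp_pos _).ne', Real.log_exp]
  ring

lemma hasDerivAt_sigEnt (a : ℝ) :
    HasDerivAt sigEnt (-a * (sigmoid a * (1 - sigmoid a))) a := by
  have hσ := Real.hasDerivAt_sigmoid a
  have hH := Real.hasDerivAt_binEntropy (Real.sigmoid_pos a).ne' (Real.sigmoid_lt_one a).ne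
  rw [Real.log_one_sub_sigmoid_sub_log_sigmoid] at hH
  rw [sigEnt_eq_binEntropy_comp_sigmoid, sigmoid_eq_real_sigmoid]
  exact hH.comp a hσ

theorem HasDerivAt.hasGradientAt_comp_inner_left {F : Type*} [NormedAddCommGroup F]
    [InnerProductSpace ℝ F] [CompleteSpace F] {f : ℝ → ℝ} {f' : ℝ} {x v : F}
    (hf : HasDerivAt f f' ⟪x, v⟫) : HasGradientAt (fun y => f ⟪y, v⟫) (f' • v) x := by
  rw [hasGradientAt_iff_hasFDerivAt]
  have hinner : HasFDerivAt (fun y : F => ⟪y, v⟫) (innerSL ℝ v) x := by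
    convert (innerSL ℝ v).hasFDerivAt using 1
    exact funext fun y => real_inner_comm v y
  refine (hf.comp_hasFDerivAt x hinner).congr_fderiv ?_
  ext w
  simp

lemma mul_pos_of_sign_mul_pos {a b y : ℝ} (ha : a ≠ 0) (hy : y = if 0 < a then 1 else -1)
    (hyb : 0 < y * b) : 0 < a * b := by
  rcases ha.lt_or_gt with ha | ha
  · rw [hy, if_neg ha.not_gt] at hyb
    nlinarith
  · rw [hy, if_pos ha] at hyb
    nlinarith

theorem beneficial_sample {d : ℕ} (θ v μp μm : EuclideanSpace ℝ (Fin d))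
    (η : ℝ) (hη : 0 < η)
    (ha : ⟪θ, v⟫ ≠ 0)
    (yhat : ℝ) (hy : yhat = if 0 < ⟪θ, v⟫ then 1 else -1)
    (hben : 0 < yhat * ⟪v, μp - μm⟫)
    (Δθ : EuclideanSpace ℝ (Fin d))
    (hΔ : Δθ = -η • gradient (fun θ' : EuclideanSpace ℝ (Fin d) => sigEnt ⟪θ', v⟫) θ) :
    ⟪θ, μp⟫ - ⟪θ, μm⟫ < ⟪θ + Δθ, μp⟫ - ⟪θ + Δθ, μm⟫ := by
  set a := ⟪θ, v⟫
  set s := sigmoid a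
  have hgrad := (hasDerivAt_sigEnt a).hasGradientAt_comp_inner_left (x := θ) (v := v)
  have hstep : Δθ = (η * (s * (1 - s)) * a) • v := by
    rw [hΔ, hgrad.gradient, smul_smul]
    congr 1
    ring
  have hs : 0 < s * (1 - s) := by
    rw [show s = Real.sigmoid a from congrFun sigmoid_eq_real_sigmoid a]
    exact mul_pos (Real.sigmoid_pos a) (sub_pos.2 (Real.sigmoid_lt_one a))
  have hgain : 0 < η * (s * (1 - s)) * (a * ⟪v, μp - μm⟫) :=
    mul_pos (mul_pos hη hs) (mul_pos_of_sign_mul_pos ha hy hben)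
  have hdiff : ⟪θ + Δθ, μp⟫ - ⟪θ + Δθ, μm⟫ =
      ⟪θ, μp⟫ - ⟪θ, μm⟫ + η * (s * (1 - s)) * (a * ⟪v, μp - μm⟫) := by
    rw [hstep, inner_add_left, inner_add_left, real_inner_smul_left, real_inner_smul_left,
      inner_sub_right]
    ring
  linarith
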